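/- arXiv:2009.07194 — 5 statements merged into one kernel-verified Lean document; each statement's English description precedes it below -/
import Mathlib

section
/- Fix an integer m ≥ 2. Define M(x) = exp(−2π det x) · (det x)^{m−1} / (((b−c)+i(a+d))/(2i))^m for x = ((a,b),(c,d)) with det x > 0, and M(x) = 0 for det x ≤ 0. Then there is a constant C (depending on m) such that |M(x)| ≤ C (1 + ‖x‖)^{−m} for all x, where ‖x‖² = a²+b²+c²+d². -/
/-!
Write `D = det x` and `w` for the denominator of `M(x)`. Then `4|w|² = ‖x‖² + 2D`, and since
`2D ≤ ‖x‖²` this gives both `D ≤ |w|²` and `‖x‖ ≤ 2|w|`. For `|w| ≤ 1` the numerator is at most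
`D^(m-1) ≤ |w|^(2m-2) ≤ |w|^m` because `2m - 2 ≥ m`, while for `|w| ≥ 1` the factor
`exp(-2πD)` absorbs `D^(m-1)` up to `(m-1)!`. In both cases `|M(x)| (1 + ‖x‖)^m ≤ (m-1)! 3^m`.
-/

/-- The Bergman archimedean test function of weight `m`:
`M(x) = exp(−2π det x) (det x)^{m−1} / (((b−c)+i(a+d))/(2i))^m` for `det x > 0`, else `0`. -/
noncomputable def bergman (m : ℕ) (x : Matrix (Fin 2) (Fin 2) ℝ) : ℂ :=
  if 0 < x.det then
    (Real.exp (-(2 * Real.pi * x.det)) : ℂ) * (x.det : ℂ) ^ (m - 1) /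
      ((((x 0 1 - x 1 0 : ℝ) : ℂ) + Complex.I * ((x 0 0 + x 1 1 : ℝ) : ℂ)) /
        (2 * Complex.I)) ^ m
  else 0

open Real

noncomputable def bergmanDenom (x : Matrix (Fin 2) (Fin 2) ℝ) : ℂ :=
  (((x 0 1 - x 1 0 : ℝ) : ℂ) + Complex.I * ((x 0 0 + x 1 1 : ℝ) : ℂ)) / (2 * Complex.I)

lemma bergman_of_det_pos (m : ℕ) {x : Matrix (Fin 2) (Fin 2) ℝ} (hx : 0 < x.det) :
    bergman m x =
      (exp (-(2 * π * x.det)) : ℂ) * (x.det : ℂ) ^ (m - 1) / bergmanDenom x ^ m :=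
  if_pos hx

lemma four_mul_norm_bergmanDenom_sq (x : Matrix (Fin 2) (Fin 2) ℝ) :
    4 * ‖bergmanDenom x‖ ^ 2 =
      x 0 0 ^ 2 + x 0 1 ^ 2 + x 1 0 ^ 2 + x 1 1 ^ 2 + 2 * x.det := by
  rw [Complex.sq_norm, bergmanDenom, Complex.normSq_div, mul_comm Complex.I,
    Complex.normSq_add_mul_I, Complex.normSq_mul, Complex.normSq_I, Complex.normSq_ofNat,
    Matrix.det_fin_two]
  ring

lemma two_mul_det_le_sum_sq (x : Matrix (Fin 2) (Fin 2) ℝ) :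
    2 * x.det ≤ x 0 0 ^ 2 + x 0 1 ^ 2 + x 1 0 ^ 2 + x 1 1 ^ 2 := by
  rw [Matrix.det_fin_two]
  nlinarith [sq_nonneg (x 0 0 - x 1 1), sq_nonneg (x 0 1 + x 1 0)]

lemma det_le_norm_bergmanDenom_sq (x : Matrix (Fin 2) (Fin 2) ℝ) :
    x.det ≤ ‖bergmanDenom x‖ ^ 2 := by
  linarith [four_mul_norm_bergmanDenom_sq x, two_mul_det_le_sum_sq x]

lemma sqrt_sum_sq_le_two_mul_norm_bergmanDenom {x : Matrix (Fin 2) (Fin 2) ℝ} (hx : 0 ≤ x.det) :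
    √(x 0 0 ^ 2 + x 0 1 ^ 2 + x 1 0 ^ 2 + x 1 1 ^ 2) ≤ 2 * ‖bergmanDenom x‖ := by
  rw [sqrt_le_left (by positivity)]
  linarith [four_mul_norm_bergmanDenom_sq x]

lemma exp_neg_mul_mul_pow_le_factorial {c D : ℝ} (hc : 1 ≤ c) (hD : 0 ≤ D) (k : ℕ) :
    exp (-(c * D)) * D ^ k ≤ k.factorial := by
  rw [exp_neg, inv_mul_le_iff₀ (exp_pos _), mul_comm (exp (c * D))]
  calc D ^ k ≤ k.factorial * exp D :=
        (div_le_iff₀' (by positivity)).1 (pow_div_factorial_le_exp D hD k)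
    _ ≤ k.factorial * exp (c * D) := by gcongr; nlinarith

lemma exp_neg_two_pi_mul_mul_pow_le {m : ℕ} (hm : 2 ≤ m) {D T : ℝ} (hD : 0 ≤ D) (hT : 0 ≤ T)
    (hDT : D ≤ T ^ 2) :
    exp (-(2 * π * D)) * D ^ (m - 1) ≤ (m - 1).factorial * min 1 T ^ m := by
  have htwo_pi : 1 ≤ 2 * π := by linarith [pi_gt_three]
  rcases le_total T 1 with hT1 | hT1
  · have hexp : exp (-(2 * π * D)) ≤ 1 := exp_le_one_iff.2 (by nlinarith)
    have hfact : (1 : ℝ) ≤ (m - 1).factorial := Nat.one_le_cast.2 (Nat.factorial_pos _)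
    calc exp (-(2 * π * D)) * D ^ (m - 1) ≤ 1 * (T ^ 2) ^ (m - 1) := by gcongr
      _ = T ^ (2 * (m - 1)) := by rw [one_mul, pow_mul]
      _ ≤ T ^ m := pow_le_pow_of_le_one hT hT1 (by omega)
      _ ≤ (m - 1).factorial * min 1 T ^ m := by
        rw [min_eq_right hT1]
        exact le_mul_of_one_le_left (by positivity) hfact
  · rw [min_eq_left hT1, one_pow, mul_one]
    exact exp_neg_mul_mul_pow_le_factorial htwo_pi hD _

lemma exp_neg_two_pi_mul_mul_pow_div_le {m : ℕ} (hm : 2 ≤ m) {D T N : ℝ} (hD : 0 < D)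
    (hT : 0 ≤ T) (hDT : D ≤ T ^ 2) (hN : 0 ≤ N) (hNT : N ≤ 2 * T) :
    exp (-(2 * π * D)) * D ^ (m - 1) / T ^ m ≤ (m - 1).factorial * 3 ^ m / (1 + N) ^ m := by
  have hTpos : 0 < T := by nlinarith
  have hN3 : 1 + N ≤ 3 * max 1 T := by
    rcases le_total T 1 with h | h <;> simp only [h, max_eq_left, max_eq_right] <;> linarith
  rw [div_le_div_iff₀ (by positivity) (by positivity)]
  calc exp (-(2 * π * D)) * D ^ (m - 1) * (1 + N) ^ m
      ≤ (m - 1).factorial * min 1 T ^ m * (3 * max 1 T) ^ m := by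
        gcongr ?_ * ?_
        · exact exp_neg_two_pi_mul_mul_pow_le hm hD.le hT hDT
        · exact pow_le_pow_left₀ (by positivity) hN3 m
    _ = (m - 1).factorial * 3 ^ m * (min 1 T * max 1 T) ^ m := by ring
    _ = (m - 1).factorial * 3 ^ m * T ^ m := by rw [min_mul_max, one_mul]

theorem stmt2 (m : ℕ) (hm : 2 ≤ m) :
    ∃ C > 0, ∀ x : Matrix (Fin 2) (Fin 2) ℝ,
      ‖bergman m x‖ ≤
        C / (1 + Real.sqrt ((x 0 0) ^ 2 + (x 0 1) ^ 2 + (x 1 0) ^ 2 + (x 1 1) ^ 2)) ^ m := by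
  refine ⟨(m - 1).factorial * 3 ^ m, by positivity, fun x => ?_⟩
  by_cases hx : 0 < x.det
  · rw [bergman_of_det_pos m hx, norm_div, norm_mul, norm_pow, norm_pow, Complex.norm_real,
      Complex.norm_real, norm_of_nonneg (exp_pos _).le, norm_of_nonneg hx.le]
    exact exp_neg_two_pi_mul_mul_pow_div_le hm hx (norm_nonneg _)
      (det_le_norm_bergmanDenom_sq x) (sqrt_nonneg _)
      (sqrt_sum_sq_le_two_mul_norm_bergmanDenom hx.le)
  · rw [bergman, if_neg hx, norm_zero]
    positivity
end

section
/- For every real number A ≥ 1, every integer m ≥ 1, and every function f : ℕ → ℂ with |f(n)| ≤ e^{n/(2A)} for all n, one has ∑_{n > Am} e^{−n/A} f(n)/n = −(e^{−m}/(Am)) ∑_{n=1}^{⌊Am⌋} f(n) + (1/A) ∫_m^∞ e^{−t} (∑_{n=1}^{⌊At⌋} f(n)) (1 + 1/t) dt/t. -/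
/-!
The kernel `ρ(t) = e^{-t} (1 + 1/t) / t` (`expKernel`) is the derivative of `-e^{-t}/t`, so
`∫_a^∞ ρ = e^{-a}/a` for `a > 0`. The integrand is `∑_{n ≥ 1} f(n) 1_{t ≥ n/A} ρ(t)`, and the
bound `|f(n)| ≤ e^{n/(2A)}` makes the integrals of the absolute values of the summands summable
(they are dominated by a geometric series of ratio `e^{-1/(2A)}`), so sum and integral may be
exchanged. The `n`-th integral is `f(n) e^{-M}/M` with `M = max(m, n/A)`: for `n ≤ Am` these are
the terms of the finite sum, for `n > Am` they are `A e^{-n/A} f(n)/n`.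
-/

open MeasureTheory Set Real Filter Topology

noncomputable def expKernel (t : ℝ) : ℝ := exp (-t) * (1 + 1 / t) / t

lemma expKernel_nonneg {t : ℝ} (ht : 0 < t) : 0 ≤ expKernel t := by
  unfold expKernel; positivity

lemma hasDerivAt_neg_exp_neg_div {x : ℝ} (hx : x ≠ 0) :
    HasDerivAt (fun t ↦ -(exp (-t) / t)) (expKernel x) x := by
  have h : HasDerivAt (fun t ↦ -(exp (-t) / t)) _ x :=
    ((hasDerivAt_neg x).exp.div (hasDerivAt_id x) hx).neg
  convert h using 1
  simp only [expKernel, id]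
  field_simp
  ring

lemma tendsto_neg_exp_neg_div_atTop : Tendsto (fun t ↦ -(exp (-t) / t)) atTop (𝓝 0) := by
  simpa [div_eq_mul_inv] using (tendsto_exp_neg_atTop_nhds_zero.mul tendsto_inv_atTop_zero).neg

lemma integrableOn_expKernel_Ioi {a : ℝ} (ha : 0 < a) : IntegrableOn expKernel (Ioi a) :=
  integrableOn_Ioi_deriv_of_nonneg' (fun _ hx ↦ hasDerivAt_neg_exp_neg_div (ha.trans_le hx).ne')
    (fun _ hx ↦ expKernel_nonneg (ha.trans hx)) tendsto_neg_exp_neg_div_atTop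

lemma integral_expKernel_Ioi {a : ℝ} (ha : 0 < a) : ∫ t in Ioi a, expKernel t = exp (-a) / a := by
  rw [integral_Ioi_of_hasDerivAt_of_nonneg'
    (fun _ hx ↦ hasDerivAt_neg_exp_neg_div (ha.trans_le hx).ne')
    (fun _ hx ↦ expKernel_nonneg (ha.trans hx)) tendsto_neg_exp_neg_div_atTop]
  ring

lemma integral_indicator_expKernel_Ioi {a : ℝ} (ha : 0 < a) (b : ℝ) :
    ∫ t in Ioi a, (Ici b).indicator expKernel t = exp (-max a b) / max a b := by
  rw [setIntegral_indicator measurableSet_Ici]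
  rcases le_or_gt b a with hba | hab
  · have hset : Ioi a ∩ Ici b = Ioi a := inter_eq_left.mpr fun _ hx ↦ hba.trans (le_of_lt hx)
    rw [hset, max_eq_left hba]
    exact integral_expKernel_Ioi ha
  · have hset : Ioi a ∩ Ici b = Ici b := inter_eq_right.mpr fun _ hx ↦ hab.trans_le hx
    rw [hset, max_eq_right hab.le, integral_Ici_eq_integral_Ioi]
    exact integral_expKernel_Ioi (ha.trans hab)

noncomputable def kernelTerm (A : ℝ) (f : ℕ → ℂ) (n : ℕ) (t : ℝ) : ℂ :=
  (Finset.Icc 1 ⌊A * t⌋₊ : Set ℕ).indicator f n * expKernel t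

lemma tsum_kernelTerm (A : ℝ) (f : ℕ → ℂ) (t : ℝ) :
    ∑' n, kernelTerm A f n t = (∑ n ∈ Finset.Icc 1 ⌊A * t⌋₊, f n) * expKernel t := by
  simp only [kernelTerm]
  rw [tsum_mul_right, sum_eq_tsum_indicator]

lemma kernelTerm_eq_indicator {A : ℝ} (hA : 0 < A) (f : ℕ → ℂ) {n : ℕ} (hn : n ≠ 0) (t : ℝ) :
    kernelTerm A f n t = f n * ((Ici ((n : ℝ) / A)).indicator expKernel t : ℝ) := by
  have hmem : n ∈ Finset.Icc 1 ⌊A * t⌋₊ ↔ t ∈ Ici ((n : ℝ) / A) := by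
    rw [Finset.mem_Icc, Nat.le_floor_iff' hn, mem_Ici, div_le_iff₀' hA]
    exact and_iff_right (Nat.one_le_iff_ne_zero.mpr hn)
  by_cases ht : t ∈ Ici ((n : ℝ) / A)
  · rw [kernelTerm, indicator_of_mem (Finset.mem_coe.mpr (hmem.mpr ht)), indicator_of_mem ht]
  · rw [kernelTerm, indicator_of_notMem (mt Finset.mem_coe.mp (mt hmem.mp ht)),
      indicator_of_notMem ht]
    simp

lemma kernelTerm_zero (A : ℝ) (f : ℕ → ℂ) : kernelTerm A f 0 = 0 :=
  funext fun t ↦ by simp [kernelTerm]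

section

variable {A a : ℝ} (hA : 0 < A) (ha : 0 < a) (f : ℕ → ℂ)
include hA ha

lemma integrable_kernelTerm (n : ℕ) : IntegrableOn (kernelTerm A f n) (Ioi a) := by
  rcases eq_or_ne n 0 with rfl | hn
  · simp [kernelTerm_zero, IntegrableOn]
  · simp_rw [IntegrableOn, funext (kernelTerm_eq_indicator hA f hn)]
    exact (((integrableOn_expKernel_Ioi ha).indicator measurableSet_Ici).ofReal).const_mul (f n)

lemma integral_kernelTerm {n : ℕ} (hn : n ≠ 0) :
    ∫ t in Ioi a, kernelTerm A f n t =
      f n * (exp (-max a (n / A)) / max a (n / A) : ℝ) := by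
  simp_rw [kernelTerm_eq_indicator hA f hn, integral_const_mul, integral_complex_ofReal,
    integral_indicator_expKernel_Ioi ha]

lemma integral_norm_kernelTerm {n : ℕ} (hn : n ≠ 0) :
    ∫ t in Ioi a, ‖kernelTerm A f n t‖ = ‖f n‖ * (exp (-max a (n / A)) / max a (n / A)) := by
  have hpos : 0 < (n : ℝ) / A := by positivity
  have hnorm (t : ℝ) :
      ‖kernelTerm A f n t‖ = ‖f n‖ * (Ici ((n : ℝ) / A)).indicator expKernel t := by
    rw [kernelTerm_eq_indicator hA f hn, norm_mul, Complex.norm_real, Real.norm_of_nonneg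
      (indicator_nonneg (s := Ici ((n : ℝ) / A))
        (fun t ht ↦ expKernel_nonneg (hpos.trans_le ht)) t)]
  simp_rw [hnorm, integral_const_mul, integral_indicator_expKernel_Ioi ha]

lemma summable_integral_norm_kernelTerm (hf : ∀ n : ℕ, ‖f n‖ ≤ exp ((n : ℝ) / (2 * A))) :
    Summable fun n ↦ ∫ t in Ioi a, ‖kernelTerm A f n t‖ := by
  have hgeom : Summable fun n : ℕ ↦ exp (-(1 / (2 * A))) ^ n / a :=
    (summable_geometric_of_lt_one (exp_nonneg _) (exp_lt_one_iff.mpr (by simp [hA]))).div_const a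
  refine hgeom.of_nonneg_of_le (fun n ↦ integral_nonneg fun t ↦ norm_nonneg _) fun n ↦ ?_
  rcases eq_or_ne n 0 with rfl | hn
  · simp [kernelTerm_zero, ha.le]
  rw [integral_norm_kernelTerm hA ha f hn]
  set M := max a (n / A)
  have haM : a ≤ M := le_max_left _ _
  calc ‖f n‖ * (exp (-M) / M)
      ≤ exp ((n : ℝ) / (2 * A)) * (exp (-(n / A)) / a) := by
        gcongr
        · exact hf n
        · exact le_max_right _ _
    _ = exp (-(1 / (2 * A))) ^ n / a := by
        rw [mul_div_assoc', ← exp_add, ← exp_nat_mul]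
        congr 2
        field_simp
        ring

lemma tail_term_eq_integral_kernelTerm_sub (n : ℕ) :
    (if A * a < n then (exp (-(n : ℝ) / A) : ℂ) * f n / n else 0) =
      1 / A * (∫ t in Ioi a, kernelTerm A f n t) -
        exp (-a) / (A * a) * (Finset.Icc 1 ⌊A * a⌋₊ : Set ℕ).indicator f n := by
  rcases eq_or_ne n 0 with rfl | hn
  · simp [kernelTerm_zero, (mul_pos hA ha).not_gt]
  rw [integral_kernelTerm hA ha f hn]
  rcases le_or_gt (n : ℝ) (A * a) with hle | hlt
  · have hmem : n ∈ Finset.Icc 1 ⌊A * a⌋₊ :=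
      Finset.mem_Icc.mpr ⟨Nat.one_le_iff_ne_zero.mpr hn, Nat.le_floor hle⟩
    rw [if_neg hle.not_gt, max_eq_left ((div_le_iff₀ hA).mpr (by linarith)),
      indicator_of_mem (by exact_mod_cast hmem)]
    push_cast
    field_simp
    ring
  · have hnmem : n ∉ Finset.Icc 1 ⌊A * a⌋₊ := by
      simp [Nat.floor_lt (mul_pos hA ha).le |>.mpr hlt]
    rw [if_pos hlt, max_eq_right ((le_div_iff₀ hA).mpr (by linarith)),
      indicator_of_notMem (by exact_mod_cast hnmem), mul_zero, sub_zero]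
    have : (A : ℂ) ≠ 0 := by exact_mod_cast hA.ne'
    push_cast
    field_simp

end

theorem stmt10 (A : ℝ) (hA : 1 ≤ A) (m : ℕ) (hm : 1 ≤ m) (f : ℕ → ℂ)
    (hf : ∀ n : ℕ, ‖f n‖ ≤ Real.exp ((n : ℝ) / (2 * A))) :
    (∑' n : ℕ, if A * (m : ℝ) < (n : ℝ) then
        (Real.exp (-(n : ℝ) / A) : ℂ) * f n / (n : ℂ) else 0) =
      -((Real.exp (-(m : ℝ)) : ℂ) / ((A : ℂ) * (m : ℂ))) *
          ∑ n ∈ Finset.Icc 1 ⌊A * (m : ℝ)⌋₊, f n +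
        (1 / (A : ℂ)) * ∫ t in Set.Ioi (m : ℝ),
          (Real.exp (-t) : ℂ) * (∑ n ∈ Finset.Icc 1 ⌊A * t⌋₊, f n) *
            (1 + 1 / (t : ℂ)) / (t : ℂ) := by
  have hA0 : 0 < A := by linarith
  have hm0 : (0 : ℝ) < m := by exact_mod_cast hm
  have hexchange := hasSum_integral_of_summable_integral_norm
    (integrable_kernelTerm hA0 hm0 f) (summable_integral_norm_kernelTerm hA0 hm0 f hf)
  have hfinite : HasSum ((Finset.Icc 1 ⌊A * (m : ℝ)⌋₊ : Set ℕ).indicator f)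
      (∑ n ∈ Finset.Icc 1 ⌊A * (m : ℝ)⌋₊, f n) := by
    rw [sum_eq_tsum_indicator]
    exact (summable_of_ne_finset_zero fun n hn ↦ indicator_of_notMem hn f).hasSum
  have hintegrand (t : ℝ) : (exp (-t) : ℂ) * (∑ n ∈ Finset.Icc 1 ⌊A * t⌋₊, f n) *
      (1 + 1 / (t : ℂ)) / (t : ℂ) = ∑' n, kernelTerm A f n t := by
    rw [tsum_kernelTerm, expKernel]
    push_cast
    ring
  rw [tsum_congr (tail_term_eq_integral_kernelTerm_sub hA0 hm0 f),
    ((hexchange.mul_left _).sub (hfinite.mul_left _)).tsum_eq, funext hintegrand]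
  push_cast
  ring
end

section
/- Let q be a positive integer, y > 0, x ∈ ℝ, N ≥ 1 and δ > 0. The number of pairs (ξ₁, ξ₂) of upper triangular matrices ξᵢ = ((aᵢ, bᵢ),(0, dᵢ)) with integer entries satisfying 0 < a₁d₁ = a₂d₂ < N and, for each i, (aᵢ−dᵢ)² + (bᵢ + 2x(aᵢ−dᵢ))²/y² < 4Nδ, is at most C_ε N^{1/2+ε} min(N^{1/2}, (Nδ)^{1/2}+1)(y²Nδ + 1) for every ε > 0. -/
/-!
Group the pairs by their common determinant `n`. A triple `(a, b, d)` in the region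
`(a - d)² + (b + 2x(a - d))² / y² < R` (here `R = 4Nδ`) has `(a - d)² < R`, and for given `(a, d)`
its entry `b` lies in an interval of length `2y√R`, so over each `(a, d)` there are at most
`B = 2y√R + 1` triples. For fixed `n` there are at most `2τ(n) ≪ N^{ε/2}` pairs with `ad = n`.
Hence the count is `≪ B² N^{ε/2} · #{(a, d) : 0 < ad < N, (a - d)² < R}`. The last set has
`≪ N^{1+ε/2}` elements by the divisor bound again, and `≪ (√R + 1)(√R + √N)` elements because
`a² = ad + a(a - d) < N + |a|√R` forces `|a| ≤ √R + √N`, so `(a - d, a)` lies in a box.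
-/

open Finset

theorem Set.Finite.of_mapsTo_of_finite_fibers {α β : Type*} {s : Set α} {t : Set β} {f : α → β}
    (hf : Set.MapsTo f s t) (ht : t.Finite) (hfib : ∀ b ∈ t, {a ∈ s | f a = b}.Finite) :
    s.Finite :=
  (ht.biUnion hfib).subset fun _ ha => Set.mem_biUnion (hf ha) ⟨ha, rfl⟩

theorem Set.ncard_le_mul_ncard_of_mapsTo {α β : Type*} {s : Set α} {t : Set β} {f : α → β}
    (hf : Set.MapsTo f s t) (ht : t.Finite) {m : ℝ}
    (hm : ∀ b ∈ t, ({a ∈ s | f a = b}.ncard : ℝ) ≤ m) : (s.ncard : ℝ) ≤ m * t.ncard := by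
  have hcover : s = ⋃ b ∈ ht.toFinset, {a ∈ s | f a = b} := by
    ext a
    simp only [Set.mem_iUnion, Set.Finite.mem_toFinset, exists_prop]
    exact ⟨fun ha => ⟨f a, hf ha, ha, rfl⟩, fun ⟨_, _, ha, _⟩ => ha⟩
  calc (s.ncard : ℝ) = ((⋃ b ∈ ht.toFinset, {a ∈ s | f a = b}).ncard : ℝ) := by rw [← hcover]
    _ ≤ ∑ b ∈ ht.toFinset, ({a ∈ s | f a = b}.ncard : ℝ) := by
        exact_mod_cast ht.toFinset.set_ncard_biUnion_le _
    _ ≤ ∑ _b ∈ ht.toFinset, m := Finset.sum_le_sum fun b hb => hm b (ht.mem_toFinset.1 hb)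
    _ = m * t.ncard := by rw [sum_const, nsmul_eq_mul, Set.ncard_eq_toFinset_card t ht, mul_comm]

theorem Set.ncard_sameFiber_le {α β : Type*} {U : Set α} (hU : U.Finite) (f : α → β)
    {m : ℝ} (hm : ∀ u ∈ U, ({v ∈ U | f v = f u}.ncard : ℝ) ≤ m) :
    ({p : α × α | p.1 ∈ U ∧ p.2 ∈ U ∧ f p.1 = f p.2}.ncard : ℝ) ≤ m * U.ncard := by
  refine Set.ncard_le_mul_ncard_of_mapsTo (fun p hp => hp.1) hU fun u hu => le_trans ?_ (hm u hu)
  have hsub : {p ∈ {p : α × α | p.1 ∈ U ∧ p.2 ∈ U ∧ f p.1 = f p.2} | p.1 = u} ⊆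
      Prod.mk u '' {v ∈ U | f v = f u} := by
    rintro ⟨_, v⟩ ⟨⟨-, hv, huv⟩, rfl⟩
    exact ⟨v, ⟨hv, huv.symm⟩, rfl⟩
  have hfin : {v ∈ U | f v = f u}.Finite := hU.subset fun v hv => hv.1
  exact_mod_cast (Set.ncard_le_ncard hsub (hfin.image _)).trans (Set.ncard_image_le hfin)

theorem Int.setOf_abs_sub_le_subset_Icc (c s : ℝ) :
    {b : ℤ | |(b : ℝ) - c| ≤ s} ⊆ Finset.Icc ⌈c - s⌉ ⌊c + s⌋ := fun b (hb : |(b : ℝ) - c| ≤ s) => by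
  rw [Finset.coe_Icc, Set.mem_Icc, Int.ceil_le, Int.le_floor]
  constructor <;> linarith [abs_le.1 hb]

theorem Int.finite_setOf_abs_sub_le (c s : ℝ) : {b : ℤ | |(b : ℝ) - c| ≤ s}.Finite :=
  (Finset.finite_toSet _).subset (Int.setOf_abs_sub_le_subset_Icc c s)

theorem Int.ncard_setOf_abs_sub_le (c : ℝ) {s : ℝ} (hs : 0 ≤ s) :
    ({b : ℤ | |(b : ℝ) - c| ≤ s}.ncard : ℝ) ≤ 2 * s + 1 := by
  have hcard := Set.ncard_le_ncard (Int.setOf_abs_sub_le_subset_Icc c s) (Finset.finite_toSet _)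
  rw [Set.ncard_coe_finset, Int.card_Icc] at hcard
  have hmax : (((⌊c + s⌋ + 1 - ⌈c - s⌉).toNat : ℤ) : ℝ) ≤ 2 * s + 1 := by
    rw [Int.toNat_eq_max, Int.cast_max, max_le_iff]
    push_cast
    constructor <;> linarith [Int.floor_le (c + s), Int.le_ceil (c - s)]
  exact le_trans (by exact_mod_cast hcard) hmax

theorem Int.card_divisorsAntidiag_le (z : ℤ) :
    #z.divisorsAntidiag ≤ 2 * #z.natAbs.divisors := by
  rcases eq_or_ne z 0 with rfl | hz
  · simp
  have hdiv : #z.divisors = 2 * #z.natAbs.divisors := by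
    rw [Int.divisors, Finset.card_disjUnion, Finset.card_map, Finset.card_map, two_mul]
  rw [← hdiv, ← Int.image_fst_divisorsAntidiag]
  refine (Finset.card_image_of_injOn fun p hp p' hp' hfst => ?_).ge
  rw [Finset.mem_coe, Int.mem_divisorsAntidiag] at hp hp'
  have ha : p.1 ≠ 0 := left_ne_zero_of_mul (hp.1 ▸ hz)
  exact Prod.ext hfst (mul_left_cancel₀ ha (hp.1.trans (hfst ▸ hp'.1).symm))

theorem add_one_le_div_sub_one_mul_pow {r : ℝ} (hr : 1 < r) (k : ℕ) :
    (k + 1 : ℝ) ≤ r / (r - 1) * r ^ k := by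
  have hbern := one_add_mul_le_pow (a := r - 1) (by linarith) (k + 1)
  rw [add_sub_cancel, Nat.cast_succ] at hbern
  rw [div_mul_eq_mul_div, le_div_iff₀ (by linarith), ← pow_succ']
  linarith

theorem add_one_le_mul_rpow_pow {e x : ℝ} (he : 0 < e) (hx : 2 ≤ x) (k : ℕ) :
    (k + 1 : ℝ) ≤ (if x ^ e < 2 then 2 ^ e / (2 ^ e - 1) else 1) * (x ^ e) ^ k := by
  split_ifs with hxe
  · have hr : (1 : ℝ) < 2 ^ e := Real.one_lt_rpow (by norm_num) he
    calc (k + 1 : ℝ) ≤ 2 ^ e / (2 ^ e - 1) * ((2 : ℝ) ^ e) ^ k :=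
          add_one_le_div_sub_one_mul_pow hr k
      _ ≤ 2 ^ e / (2 ^ e - 1) * (x ^ e) ^ k := by
          have : (0 : ℝ) ≤ 2 ^ e / (2 ^ e - 1) := div_nonneg (by positivity) (by linarith)
          gcongr
  · calc (k + 1 : ℝ) ≤ 2 ^ k := by exact_mod_cast Nat.lt_two_pow_self
      _ ≤ (x ^ e) ^ k := pow_le_pow_left₀ (by norm_num) (not_lt.1 hxe) k
      _ = 1 * (x ^ e) ^ k := (one_mul _).symm

theorem Nat.rpow_eq_prod_primeFactors {n : ℕ} (hn : n ≠ 0) (e : ℝ) :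
    (n : ℝ) ^ e = ∏ p ∈ n.primeFactors, ((p : ℝ) ^ e) ^ n.factorization p := by
  have hprod : ∏ p ∈ n.primeFactors, p ^ n.factorization p = n := by
    simpa [Finsupp.prod, Nat.support_factorization] using Nat.prod_factorization_pow_eq_self hn
  conv_lhs => rw [← hprod]
  push_cast
  rw [← Real.finsetProd_rpow _ _ fun _ _ => by positivity]
  exact prod_congr rfl fun p _ => (Real.rpow_pow_comm (by positivity) _ _).symm

theorem Nat.card_divisors_le_rpow {e : ℝ} (he : 0 < e) :
    ∃ C, ∀ n : ℕ, n ≠ 0 → (#n.divisors : ℝ) ≤ C * (n : ℝ) ^ e := by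
  set c : ℝ := 2 ^ e / (2 ^ e - 1)
  have hc : 1 ≤ c := by
    have : (1 : ℝ) < 2 ^ e := Real.one_lt_rpow (by norm_num) he
    rw [le_div_iff₀ (by linarith)]
    linarith
  set M := ⌈(2 : ℝ) ^ e⁻¹⌉₊
  refine ⟨c ^ M, fun n hn => ?_⟩
  set g : ℕ → ℝ := fun p => if (p : ℝ) ^ e < 2 then c else 1
  -- only the primes `p < 2 ^ (1 / e)` contribute a factor `c`
  have hsmall : ∏ p ∈ n.primeFactors, g p ≤ c ^ M := by
    rw [prod_ite, prod_const, prod_const, one_pow, mul_one]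
    refine pow_le_pow_right₀ hc ((card_le_card fun p hp => ?_).trans (card_range M).le)
    rw [mem_filter] at hp
    have hp2 : (p : ℝ) < 2 ^ e⁻¹ :=
      calc (p : ℝ) = ((p : ℝ) ^ e) ^ e⁻¹ := by
            rw [← Real.rpow_mul (by positivity), mul_inv_cancel₀ he.ne', Real.rpow_one]
        _ < 2 ^ e⁻¹ := Real.rpow_lt_rpow (by positivity) hp.2 (inv_pos.2 he)
    exact mem_range.2 (by exact_mod_cast hp2.trans_le (Nat.le_ceil _))
  calc (#n.divisors : ℝ) = ∏ p ∈ n.primeFactors, ((n.factorization p : ℝ) + 1) := by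
        rw [Nat.card_divisors hn]; push_cast; rfl
    _ ≤ ∏ p ∈ n.primeFactors, (g p * ((p : ℝ) ^ e) ^ n.factorization p) :=
        prod_le_prod (fun _ _ => by positivity) fun p hp =>
          add_one_le_mul_rpow_pow he (by exact_mod_cast (prime_of_mem_primeFactors hp).two_le) _
    _ = (∏ p ∈ n.primeFactors, g p) * (n : ℝ) ^ e := by
        rw [prod_mul_distrib, Nat.rpow_eq_prod_primeFactors hn]
    _ ≤ c ^ M * (n : ℝ) ^ e := by gcongr

/-- `v = (a, b, d)` stands for the matrix `((a, b), (0, d))`. -/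
def InRegion (x y R : ℝ) (v : ℤ × ℤ × ℤ) : Prop :=
  ((v.1 - v.2.2 : ℤ) : ℝ) ^ 2 + ((v.2.1 : ℝ) + 2 * x * ((v.1 - v.2.2 : ℤ) : ℝ)) ^ 2 / y ^ 2 < R

def diagPairs (N R : ℝ) : Set (ℤ × ℤ) :=
  {p | 0 < p.1 * p.2 ∧ ((p.1 * p.2 : ℤ) : ℝ) < N ∧ ((p.1 - p.2 : ℤ) : ℝ) ^ 2 < R}

section Region

variable {x y R : ℝ}

theorem InRegion.sq_lt {v : ℤ × ℤ × ℤ} (h : InRegion x y R v) :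
    ((v.1 - v.2.2 : ℤ) : ℝ) ^ 2 < R := by
  have : 0 ≤ ((v.2.1 : ℝ) + 2 * x * ((v.1 - v.2.2 : ℤ) : ℝ)) ^ 2 / y ^ 2 := by positivity
  exact lt_of_le_of_lt (le_add_of_nonneg_right this) h

theorem InRegion.abs_le (hy : 0 < y) {v : ℤ × ℤ × ℤ} (h : InRegion x y R v) :
    |(v.2.1 : ℝ) - -(2 * x * ((v.1 - v.2.2 : ℤ) : ℝ))| ≤ y * √R := by
  rw [sub_neg_eq_add]
  have hdiv : ((v.2.1 : ℝ) + 2 * x * ((v.1 - v.2.2 : ℤ) : ℝ)) ^ 2 / y ^ 2 < R := by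
    have := sq_nonneg ((v.1 - v.2.2 : ℤ) : ℝ)
    unfold InRegion at h
    linarith
  rw [div_lt_iff₀ (by positivity)] at hdiv
  calc _ ≤ √(R * y ^ 2) := Real.abs_le_sqrt hdiv.le
    _ = y * √R := by rw [Real.sqrt_mul' _ (sq_nonneg y), Real.sqrt_sq hy.le, mul_comm]

theorem inRegion_fiber_subset (Q : Set (ℤ × ℤ)) (hy : 0 < y) (p : ℤ × ℤ) :
    {v ∈ {v : ℤ × ℤ × ℤ | (v.1, v.2.2) ∈ Q ∧ InRegion x y R v} | (v.1, v.2.2) = p} ⊆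
      (fun b => (p.1, b, p.2)) ''
        {b : ℤ | |(b : ℝ) - -(2 * x * ((p.1 - p.2 : ℤ) : ℝ))| ≤ y * √R} := by
  rintro ⟨a, b, d⟩ ⟨⟨-, h⟩, rfl⟩
  exact ⟨b, h.abs_le hy, rfl⟩

theorem finite_inRegion {Q : Set (ℤ × ℤ)} (hQ : Q.Finite) (hy : 0 < y) :
    {v : ℤ × ℤ × ℤ | (v.1, v.2.2) ∈ Q ∧ InRegion x y R v}.Finite :=
  Set.Finite.of_mapsTo_of_finite_fibers (fun _ hv => hv.1) hQ fun p _ =>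
    ((Int.finite_setOf_abs_sub_le _ _).image _).subset (inRegion_fiber_subset Q hy p)

theorem ncard_inRegion_le {Q : Set (ℤ × ℤ)} (hQ : Q.Finite) (hy : 0 < y) :
    ({v : ℤ × ℤ × ℤ | (v.1, v.2.2) ∈ Q ∧ InRegion x y R v}.ncard : ℝ) ≤
      (2 * (y * √R) + 1) * Q.ncard :=
  Set.ncard_le_mul_ncard_of_mapsTo (fun _ hv => hv.1) hQ fun p _ => by
    have hfin := Int.finite_setOf_abs_sub_le (-(2 * x * ((p.1 - p.2 : ℤ) : ℝ))) (y * √R)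
    calc _ ≤ (((fun b => (p.1, b, p.2)) '' _).ncard : ℝ) := by
          exact_mod_cast Set.ncard_le_ncard (inRegion_fiber_subset Q hy p) (hfin.image _)
      _ ≤ _ := by exact_mod_cast Set.ncard_image_le hfin
      _ ≤ _ := Int.ncard_setOf_abs_sub_le _ (by positivity)

end Region

section DiagPairs

variable {N R : ℝ}

theorem abs_le_of_mem_diagPairs {p : ℤ × ℤ} (hp : p ∈ diagPairs N R) :
    |((p.1 - p.2 : ℤ) : ℝ)| ≤ √R ∧ |(p.1 : ℝ)| ≤ √R + √N := by
  obtain ⟨hpos, hlt, hsq⟩ := hp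
  have ht : |((p.1 - p.2 : ℤ) : ℝ)| ≤ √R := Real.abs_le_sqrt hsq.le
  refine ⟨ht, ?_⟩
  have hN : 0 ≤ N := by
    have : (0 : ℝ) < ((p.1 * p.2 : ℤ) : ℝ) := by exact_mod_cast hpos
    linarith
  have hsq_le : (p.1 : ℝ) ^ 2 ≤ √N ^ 2 + |(p.1 : ℝ)| * √R := by
    have hsplit : (p.1 : ℝ) ^ 2 = ((p.1 * p.2 : ℤ) : ℝ) + p.1 * ((p.1 - p.2 : ℤ) : ℝ) := by
      push_cast; ring
    have hprod : (p.1 : ℝ) * ((p.1 - p.2 : ℤ) : ℝ) ≤ |(p.1 : ℝ)| * √R := by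
      calc _ ≤ |(p.1 : ℝ) * ((p.1 - p.2 : ℤ) : ℝ)| := le_abs_self _
        _ ≤ |(p.1 : ℝ)| * √R := by rw [abs_mul]; gcongr
    rw [Real.sq_sqrt hN, hsplit]
    linarith
  by_contra! hbig
  have ha : 0 < |(p.1 : ℝ)| := (Real.sqrt_nonneg R).trans_lt (by linarith [Real.sqrt_nonneg N])
  nlinarith [sq_abs (p.1 : ℝ), mul_lt_mul_of_pos_left hbig ha, Real.sqrt_nonneg N,
    Real.sqrt_nonneg R]

theorem diagPairs_mapsTo :
    Set.MapsTo (fun p : ℤ × ℤ => (p.1 - p.2, p.1)) (diagPairs N R)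
      ({t : ℤ | |(t : ℝ) - 0| ≤ √R} ×ˢ {a : ℤ | |(a : ℝ) - 0| ≤ √R + √N}) := fun p hp => by
  obtain ⟨ht, ha⟩ := abs_le_of_mem_diagPairs hp
  exact ⟨by simpa using ht, by simpa using ha⟩

theorem diagPairs_injective : Function.Injective fun p : ℤ × ℤ => (p.1 - p.2, p.1) :=
  fun p q h => by
    simp only [Prod.mk.injEq] at h
    exact Prod.ext h.2 (by omega)

theorem finite_diagPairs : (diagPairs N R).Finite :=
  Set.Finite.of_injOn diagPairs_mapsTo diagPairs_injective.injOn
    ((Int.finite_setOf_abs_sub_le _ _).prod (Int.finite_setOf_abs_sub_le _ _))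

theorem ncard_diagPairs_le_box :
    ((diagPairs N R).ncard : ℝ) ≤ (2 * √R + 1) * (2 * (√R + √N) + 1) := by
  have hbox := Set.ncard_le_ncard_of_injOn _ (diagPairs_mapsTo (N := N) (R := R))
    diagPairs_injective.injOn
    ((Int.finite_setOf_abs_sub_le _ _).prod (Int.finite_setOf_abs_sub_le _ _))
  rw [Set.ncard_prod] at hbox
  calc ((diagPairs N R).ncard : ℝ)
      ≤ ({t : ℤ | |(t : ℝ) - 0| ≤ √R}.ncard : ℝ) * {a : ℤ | |(a : ℝ) - 0| ≤ √R + √N}.ncard := by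
        rw [← Nat.cast_mul]; exact Nat.cast_le.2 hbox
    _ ≤ _ := by gcongr <;> exact Int.ncard_setOf_abs_sub_le _ (by positivity)

end DiagPairs

section DivisorBound

variable {C e : ℝ}

theorem card_divisorsAntidiag_le_rpow (hC0 : 0 ≤ C) (he : 0 ≤ e)
    (hC : ∀ n : ℕ, n ≠ 0 → (#n.divisors : ℝ) ≤ C * (n : ℝ) ^ e) {N : ℝ} {n : ℤ}
    (hn : 0 < n) (hnN : (n : ℝ) ≤ N) :
    (#n.divisorsAntidiag : ℝ) ≤ 2 * C * N ^ e := by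
  have habs : ((n.natAbs : ℕ) : ℝ) = n := by rw [Nat.cast_natAbs, abs_of_pos hn]
  calc (#n.divisorsAntidiag : ℝ) ≤ 2 * #n.natAbs.divisors := by
        exact_mod_cast Int.card_divisorsAntidiag_le n
    _ ≤ 2 * (C * (n : ℝ) ^ e) := by
        rw [← habs]; gcongr; exact hC _ (Int.natAbs_ne_zero.2 hn.ne')
    _ ≤ 2 * C * N ^ e := by
        rw [← mul_assoc]; gcongr

theorem ncard_diagPairs_le_divisor (hC0 : 0 ≤ C) (he : 0 ≤ e)
    (hC : ∀ n : ℕ, n ≠ 0 → (#n.divisors : ℝ) ≤ C * (n : ℝ) ^ e) {N R : ℝ}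
    (hN : 0 ≤ N) :
    ((diagPairs N R).ncard : ℝ) ≤ 2 * C * N ^ e * N := by
  have hmaps : Set.MapsTo (fun p : ℤ × ℤ => p.1 * p.2) (diagPairs N R) (Finset.Ioo 0 ⌈N⌉) :=
    fun p hp => Finset.mem_Ioo.2 ⟨hp.1, Int.lt_ceil.2 hp.2.1⟩
  have hcard : (#(Finset.Ioo 0 ⌈N⌉) : ℝ) ≤ N := by
    rw [Int.card_Ioo, ← Int.cast_natCast, Int.toNat_eq_max, Int.cast_max, max_le_iff]
    push_cast
    constructor <;> linarith [Int.ceil_lt_add_one N]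
  refine (Set.ncard_le_mul_ncard_of_mapsTo (m := 2 * C * N ^ e) hmaps (Finset.finite_toSet _)
    fun n hn => ?_).trans ?_
  · rw [Finset.mem_coe, Finset.mem_Ioo, Int.lt_ceil] at hn
    have hsub : {p ∈ diagPairs N R | p.1 * p.2 = n} ⊆ (n.divisorsAntidiag : Set (ℤ × ℤ)) :=
      fun p hp => Int.mem_divisorsAntidiag.2 ⟨hp.2, hn.1.ne'⟩
    calc _ ≤ ((n.divisorsAntidiag : Set (ℤ × ℤ)).ncard : ℝ) := by
          exact_mod_cast Set.ncard_le_ncard hsub (Finset.finite_toSet _)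
      _ ≤ 2 * C * N ^ e := by
          rw [Set.ncard_coe_finset]
          exact card_divisorsAntidiag_le_rpow hC0 he hC hn.1 hn.2.le
  · rw [Set.ncard_coe_finset]
    gcongr

theorem ncard_sameDet_le (hC0 : 0 ≤ C) (he : 0 ≤ e)
    (hC : ∀ n : ℕ, n ≠ 0 → (#n.divisors : ℝ) ≤ C * (n : ℝ) ^ e) {x y N R : ℝ}
    (hy : 0 < y) (hN : 0 ≤ N) :
    (Set.ncard {v : (ℤ × ℤ × ℤ) × (ℤ × ℤ × ℤ) |
          0 < v.1.1 * v.1.2.2 ∧ ((v.1.1 * v.1.2.2 : ℤ) : ℝ) < N ∧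
          v.1.1 * v.1.2.2 = v.2.1 * v.2.2.2 ∧ InRegion x y R v.1 ∧ InRegion x y R v.2} : ℝ)
      ≤ (2 * (y * √R) + 1) ^ 2 * (2 * C * N ^ e) * (diagPairs N R).ncard := by
  set U := {v : ℤ × ℤ × ℤ | (v.1, v.2.2) ∈ diagPairs N R ∧ InRegion x y R v}
  have hU : U.Finite := finite_inRegion finite_diagPairs hy
  have hsub : {v : (ℤ × ℤ × ℤ) × (ℤ × ℤ × ℤ) |
          0 < v.1.1 * v.1.2.2 ∧ ((v.1.1 * v.1.2.2 : ℤ) : ℝ) < N ∧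
          v.1.1 * v.1.2.2 = v.2.1 * v.2.2.2 ∧ InRegion x y R v.1 ∧ InRegion x y R v.2} ⊆
        {p | p.1 ∈ U ∧ p.2 ∈ U ∧ p.1.1 * p.1.2.2 = p.2.1 * p.2.2.2} := by
    rintro ⟨u, v⟩ ⟨hpos, hlt, hdet, hu, hv⟩
    exact ⟨⟨⟨hpos, hlt, hu.sq_lt⟩, hu⟩, ⟨⟨hdet ▸ hpos, hdet ▸ hlt, hv.sq_lt⟩, hv⟩, hdet⟩
  have hfiber : ∀ u ∈ U, ({v ∈ U | v.1 * v.2.2 = u.1 * u.2.2}.ncard : ℝ) ≤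
      (2 * (y * √R) + 1) * (2 * C * N ^ e) := by
    rintro u ⟨⟨hpos, hlt, -⟩, -⟩
    have hsubQ : {v ∈ U | v.1 * v.2.2 = u.1 * u.2.2} ⊆
        {v : ℤ × ℤ × ℤ | (v.1, v.2.2) ∈ ((u.1 * u.2.2).divisorsAntidiag : Set (ℤ × ℤ)) ∧
          InRegion x y R v} :=
      fun v hv => ⟨Int.mem_divisorsAntidiag.2 ⟨hv.2, hpos.ne'⟩, hv.1.2⟩
    have hfin := Finset.finite_toSet (u.1 * u.2.2).divisorsAntidiag
    calc _ ≤ (Set.ncard {v : ℤ × ℤ × ℤ | (v.1, v.2.2) ∈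
            ((u.1 * u.2.2).divisorsAntidiag : Set (ℤ × ℤ)) ∧ InRegion x y R v} : ℝ) := by
          exact_mod_cast Set.ncard_le_ncard hsubQ (finite_inRegion hfin hy)
      _ ≤ (2 * (y * √R) + 1) * #(u.1 * u.2.2).divisorsAntidiag := by
          rw [← Set.ncard_coe_finset]; exact ncard_inRegion_le hfin hy
      _ ≤ _ := by gcongr; exact card_divisorsAntidiag_le_rpow hC0 he hC hpos hlt.le
  calc _ ≤ ({p : (ℤ × ℤ × ℤ) × (ℤ × ℤ × ℤ) |
          p.1 ∈ U ∧ p.2 ∈ U ∧ p.1.1 * p.1.2.2 = p.2.1 * p.2.2.2}.ncard : ℝ) := by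
        exact_mod_cast Set.ncard_le_ncard hsub ((hU.prod hU).subset fun p hp => ⟨hp.1, hp.2.1⟩)
    _ ≤ (2 * (y * √R) + 1) * (2 * C * N ^ e) * U.ncard :=
        Set.ncard_sameFiber_le hU (fun v => v.1 * v.2.2) hfiber
    _ ≤ (2 * (y * √R) + 1) * (2 * C * N ^ e) * ((2 * (y * √R) + 1) * (diagPairs N R).ncard) := by
        gcongr
        exact ncard_inRegion_le finite_diagPairs hy
    _ = _ := by ring

end DivisorBound

theorem two_mul_le_mul_min_of_le_of_le {C E s u P : ℝ} (hC : 1 ≤ C) (hE : 1 ≤ E) (hs : 1 ≤ s)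
    (hu : 0 ≤ u) (hP₁ : P ≤ 2 * C * E * s ^ 2)
    (hP₂ : P ≤ (2 * (2 * u) + 1) * (2 * (2 * u + s) + 1)) :
    2 * C * E * P ≤ 48 * C ^ 2 * E ^ 2 * s * min s (u + 1) := by
  have hCE : 0 ≤ 2 * C * E := by positivity
  rcases le_total s (u + 1) with h | h
  · rw [min_eq_left h]
    calc 2 * C * E * P ≤ 2 * C * E * (2 * C * E * s ^ 2) := by gcongr
      _ ≤ 48 * C ^ 2 * E ^ 2 * s * s := by nlinarith [sq_nonneg (C * E * s)]
  · rw [min_eq_right h]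
    calc 2 * C * E * P ≤ 2 * C * E * ((4 * (u + 1)) * (6 * s)) := by
          gcongr
          exact hP₂.trans (by gcongr <;> linarith)
      _ = 48 * (C * E) * s * (u + 1) := by ring
      _ ≤ 48 * (C * E) ^ 2 * s * (u + 1) := by
          gcongr; nlinarith [one_le_mul_of_one_le_of_one_le hC hE]
      _ = 48 * C ^ 2 * E ^ 2 * s * (u + 1) := by ring

/-- Second moment count for pairs of integral upper-triangular matrices
`ξᵢ = ((aᵢ,bᵢ),(0,dᵢ))`, encoded as triples `(aᵢ, bᵢ, dᵢ) ∈ ℤ³`. -/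
theorem stmt11 (ε : ℝ) (hε : 0 < ε) :
    ∃ C > 0, ∀ q : ℕ, 0 < q → ∀ x y N δ : ℝ, 0 < y → 1 ≤ N → 0 < δ →
      (Set.ncard {v : (ℤ × ℤ × ℤ) × (ℤ × ℤ × ℤ) |
          0 < v.1.1 * v.1.2.2 ∧ ((v.1.1 * v.1.2.2 : ℤ) : ℝ) < N ∧
          v.1.1 * v.1.2.2 = v.2.1 * v.2.2.2 ∧
          ((v.1.1 - v.1.2.2 : ℤ) : ℝ) ^ 2 +
              ((v.1.2.1 : ℝ) + 2 * x * ((v.1.1 - v.1.2.2 : ℤ) : ℝ)) ^ 2 / y ^ 2 < 4 * N * δ ∧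
          ((v.2.1 - v.2.2.2 : ℤ) : ℝ) ^ 2 +
              ((v.2.2.1 : ℝ) + 2 * x * ((v.2.1 - v.2.2.2 : ℤ) : ℝ)) ^ 2 / y ^ 2 < 4 * N * δ} : ℝ)
        ≤ C * N ^ ((1 : ℝ) / 2 + ε) * min (N ^ ((1 : ℝ) / 2)) ((N * δ) ^ ((1 : ℝ) / 2) + 1) *
            (y ^ 2 * N * δ + 1) := by
  have hε2 : 0 ≤ ε / 2 := by positivity
  obtain ⟨C, hC⟩ := Nat.card_divisors_le_rpow (half_pos hε)
  have hC1 : 1 ≤ C := by simpa using hC 1 one_ne_zero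
  refine ⟨1536 * C ^ 2, by positivity, fun q _ x y N δ hy hN hδ => ?_⟩
  have hN0 : 0 < N := by linarith
  have hroot : √(4 * N * δ) = 2 * √(N * δ) := by
    rw [mul_assoc, Real.sqrt_mul (by norm_num), show (4 : ℝ) = 2 ^ 2 by norm_num,
      Real.sqrt_sq (by norm_num)]
  have hB : (2 * (y * √(4 * N * δ)) + 1) ^ 2 ≤ 32 * (y ^ 2 * N * δ + 1) := by
    rw [hroot]
    nlinarith [Real.sq_sqrt (by positivity : 0 ≤ N * δ), sq_nonneg (4 * y * √(N * δ) - 1)]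
  have hP := two_mul_le_mul_min_of_le_of_le (P := ((diagPairs N (4 * N * δ)).ncard : ℝ)) hC1
    (Real.one_le_rpow hN hε2) (Real.one_le_sqrt.2 hN) (Real.sqrt_nonneg (N * δ))
    (by rw [Real.sq_sqrt hN0.le]; exact ncard_diagPairs_le_divisor (by linarith) hε2 hC hN0.le)
    (by rw [← hroot]; exact ncard_diagPairs_le_box)
  have hpow : N ^ ((1 : ℝ) / 2 + ε) = √N * (N ^ (ε / 2)) ^ 2 := by
    rw [Real.sqrt_eq_rpow, ← Real.rpow_natCast, ← Real.rpow_mul hN0.le, ← Real.rpow_add hN0]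
    norm_num
  calc _ ≤ (2 * (y * √(4 * N * δ)) + 1) ^ 2 * (2 * C * N ^ (ε / 2)) *
          (diagPairs N (4 * N * δ)).ncard :=
        ncard_sameDet_le (by linarith) hε2 hC hy hN0.le
    _ ≤ 32 * (y ^ 2 * N * δ + 1) *
          (48 * C ^ 2 * (N ^ (ε / 2)) ^ 2 * √N * min √N (√(N * δ) + 1)) := by
        rw [mul_assoc]
        exact mul_le_mul hB hP (by positivity) (by positivity)
    _ = _ := by rw [hpow, ← Real.sqrt_eq_rpow, ← Real.sqrt_eq_rpow]; ring
end

section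
/- Let n be a positive integer and δ ≥ 1. The number of integer matrices ξ = ((a,b),(c,d)) with det ξ = n, a = 0 or d = 0, and a²+b²+c²+d² ≤ 6nδ is at most C_ε n^{1/2+ε} δ^{1/2} for every ε > 0. -/
/-!
If `a = 0` or `d = 0` then `b * c = -n`, so `(b, c)` is one of the `2 d(n)` factorizations of `-n`,
while the remaining diagonal entry `t` satisfies `t ^ 2 ≤ 6 n δ` and so takes `O(√(n δ))` values.
The divisor bound `d(n) = O_ε(n ^ ε)` finishes: `d(n) / n ^ ε = ∏ (a_p + 1) / (p ^ ε) ^ a_p`, whose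
factors are at most `1` once `p ^ ε ≥ 2` and at most `1 + 1 / (ε log 2)` for the boundedly many
other primes.
-/

open Finset Real

theorem natCast_add_one_le_pow {x : ℝ} (hx : 2 ≤ x) (a : ℕ) : (a + 1 : ℝ) ≤ x ^ a :=
  calc (a + 1 : ℝ) = 1 + a * 1 := by ring
    _ ≤ (1 + 1) ^ a := one_add_mul_le_pow (by norm_num) a
    _ ≤ x ^ a := by gcongr; linarith

theorem natCast_add_one_le_mul_pow {x : ℝ} (hx : 1 < x) (a : ℕ) :
    (a + 1 : ℝ) ≤ (1 + (log x)⁻¹) * x ^ a := by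
  have hlog : 0 < log x := log_pos hx
  have hexp : 1 + a * log x ≤ x ^ a := by
    rw [← rpow_natCast, rpow_def_of_pos (by linarith), mul_comm]
    linarith [add_one_le_exp (log x * a)]
  calc (a + 1 : ℝ) ≤ (1 + (log x)⁻¹) * (1 + a * log x) := by
        field_simp
        nlinarith [mul_nonneg (mul_nonneg a.cast_nonneg hlog.le) hlog.le]
    _ ≤ _ := by gcongr

theorem Nat.cast_rpow_eq_prod_primeFactors {n : ℕ} (hn : n ≠ 0) (ε : ℝ) :
    (n : ℝ) ^ ε = ∏ p ∈ n.primeFactors, ((p : ℝ) ^ ε) ^ n.factorization p := by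
  conv_lhs => rw [Nat.prod_primeFactors_pow_factorization hn]
  push_cast
  rw [← finsetProd_rpow _ _ fun p _ ↦ by positivity]
  exact prod_congr rfl fun p _ ↦ (rpow_pow_comm p.cast_nonneg ε _).symm

theorem Nat.card_divisors_le_mul_rpow {ε : ℝ} (hε : 0 < ε) :
    ∃ C > 0, ∀ n : ℕ, n ≠ 0 → (#n.divisors : ℝ) ≤ C * (n : ℝ) ^ ε := by
  set K : ℝ := 1 + (ε * Real.log 2)⁻¹
  have hK : 1 ≤ K := le_add_of_nonneg_right (by positivity [Real.log_pos one_lt_two])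
  set B : ℕ := ⌈(2 : ℝ) ^ ε⁻¹⌉₊
  have local_bound : ∀ p : ℕ, p.Prime → ∀ a : ℕ,
      (a + 1 : ℝ) ≤ (if p < B then K else 1) * ((p : ℝ) ^ ε) ^ a := by
    intro p hp a
    have hp2 : (2 : ℝ) ≤ p := by exact_mod_cast hp.two_le
    split_ifs with hpB
    · have hx : 1 < (p : ℝ) ^ ε := one_lt_rpow (by linarith) hε
      have hlog : ε * Real.log 2 ≤ Real.log ((p : ℝ) ^ ε) := by
        rw [log_rpow (by linarith)]; gcongr
      refine (natCast_add_one_le_mul_pow hx a).trans ?_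
      gcongr
      show _ ≤ 1 + (ε * Real.log 2)⁻¹
      gcongr
    · rw [one_mul]
      refine natCast_add_one_le_pow ?_ a
      have : (2 : ℝ) ^ ε⁻¹ ≤ p := (Nat.le_ceil _).trans (by exact_mod_cast not_lt.mp hpB)
      calc (2 : ℝ) = ((2 : ℝ) ^ ε⁻¹) ^ ε := by
            rw [← rpow_mul zero_le_two, inv_mul_cancel₀ hε.ne', rpow_one]
        _ ≤ _ := by gcongr
  refine ⟨K ^ B, by positivity, fun n hn ↦ ?_⟩
  have hsmall : ∏ p ∈ n.primeFactors, (if p < B then K else 1) ≤ K ^ B := by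
    rw [prod_ite, prod_const_one, mul_one, prod_const]
    refine pow_le_pow_right₀ hK <| (card_le_card fun p hp ↦ ?_).trans_eq (card_range B)
    simpa using (mem_filter.mp hp).2
  calc (#n.divisors : ℝ) = ∏ p ∈ n.primeFactors, (n.factorization p + 1 : ℝ) := by
        rw [Nat.card_divisors hn]; push_cast; rfl
    _ ≤ ∏ p ∈ n.primeFactors, (if p < B then K else 1) * ((p : ℝ) ^ ε) ^ n.factorization p :=
        prod_le_prod (fun _ _ ↦ by positivity) fun p hp ↦
          local_bound p (Nat.prime_of_mem_primeFactors hp) _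
    _ ≤ K ^ B * (n : ℝ) ^ ε := by
        rw [prod_mul_distrib, ← Nat.cast_rpow_eq_prod_primeFactors hn]
        gcongr

theorem Int.card_divisors (z : ℤ) : #z.divisors = 2 * #z.natAbs.divisors := by
  rw [Int.divisors, card_disjUnion, card_map, card_map, two_mul]

theorem Int.card_divisorsAntidiag (z : ℤ) : #z.divisorsAntidiag = #z.divisors := by
  rw [← Int.image_fst_divisorsAntidiag, card_image_of_injOn]
  rintro ⟨b, c⟩ h ⟨b', c'⟩ h' (rfl : b = b')
  simp only [Finset.mem_coe, Int.mem_divisorsAntidiag] at h h'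
  have hb : b ≠ 0 := by rintro rfl; exact h.2 (by rw [← h.1, zero_mul])
  simp only [Prod.mk.injEq, true_and]
  exact mul_left_cancel₀ hb (h.1.trans h'.1.symm)

theorem Int.mem_Icc_neg_floor_sqrt {t : ℤ} {x : ℝ} (h : (t : ℝ) ^ 2 ≤ x) :
    t ∈ Icc (-⌊√x⌋) ⌊√x⌋ := by
  have := abs_le.mp (Real.abs_le_sqrt h)
  rw [mem_Icc, neg_le, Int.le_floor, Int.le_floor]
  push_cast
  constructor <;> linarith

theorem Int.card_Icc_neg_floor_le {x : ℝ} (hx : 1 ≤ x) : (#(Icc (-⌊x⌋) ⌊x⌋) : ℝ) ≤ 3 * x := by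
  have hfloor : (0 : ℤ) ≤ ⌊x⌋ := Int.floor_nonneg.mpr (by linarith)
  rw [Int.card_Icc, show ⌊x⌋ + 1 - -⌊x⌋ = 2 * ⌊x⌋ + 1 by ring, ← Int.cast_natCast (R := ℝ),
    Int.toNat_of_nonneg (by omega)]
  push_cast
  linarith [Int.floor_le x]

def zeroDiagMatrix : Bool × (ℤ × ℤ) × ℤ → Matrix (Fin 2) (Fin 2) ℤ
  | (true, (b, c), t) => !![0, b; c, t]
  | (false, (b, c), t) => !![t, b; c, 0]

def zeroDiagDetSet (n : ℤ) (x : ℝ) : Set (Matrix (Fin 2) (Fin 2) ℤ) :=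
  {ξ | ξ.det = n ∧ (ξ 0 0 = 0 ∨ ξ 1 1 = 0) ∧
    (ξ 0 0 : ℝ) ^ 2 + (ξ 0 1 : ℝ) ^ 2 + (ξ 1 0 : ℝ) ^ 2 + (ξ 1 1 : ℝ) ^ 2 ≤ x}

theorem zeroDiagDetSet_subset_image {n : ℤ} (hn : n ≠ 0) (x : ℝ) :
    zeroDiagDetSet n x ⊆
      ((univ ×ˢ (-n).divisorsAntidiag ×ˢ Icc (-⌊√x⌋) ⌊√x⌋).image zeroDiagMatrix : Set _) := by
  rintro ξ ⟨hdet, hdiag | hdiag, hnorm⟩ <;> rw [Matrix.det_fin_two, hdiag] at hdet <;>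
    rw [mem_coe, mem_image]
  · refine ⟨(true, (ξ 0 1, ξ 1 0), ξ 1 1), ?_, by rw [Matrix.eta_fin_two ξ, hdiag]; rfl⟩
    simp only [mem_product, mem_univ, Int.mem_divisorsAntidiag, true_and]
    exact ⟨⟨by linarith, neg_ne_zero.mpr hn⟩, Int.mem_Icc_neg_floor_sqrt (by nlinarith)⟩
  · refine ⟨(false, (ξ 0 1, ξ 1 0), ξ 0 0), ?_, by rw [Matrix.eta_fin_two ξ, hdiag]; rfl⟩
    simp only [mem_product, mem_univ, Int.mem_divisorsAntidiag, true_and]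
    exact ⟨⟨by linarith, neg_ne_zero.mpr hn⟩, Int.mem_Icc_neg_floor_sqrt (by nlinarith)⟩

theorem ncard_zeroDiagDetSet_le {n : ℤ} (hn : n ≠ 0) {x : ℝ} (hx : 1 ≤ x) :
    ((zeroDiagDetSet n x).ncard : ℝ) ≤ 12 * #n.natAbs.divisors * √x := calc
  _ ≤ (#((univ ×ˢ (-n).divisorsAntidiag ×ˢ Icc (-⌊√x⌋) ⌊√x⌋).image zeroDiagMatrix) : ℝ) := by
      rw [← Set.ncard_coe_finset]
      exact_mod_cast Set.ncard_le_ncard (zeroDiagDetSet_subset_image hn x) (finite_toSet _)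
  _ ≤ #((univ : Finset Bool) ×ˢ (-n).divisorsAntidiag ×ˢ Icc (-⌊√x⌋) ⌊√x⌋) := by
      exact_mod_cast card_image_le
  _ = 2 * (2 * #n.natAbs.divisors) * #(Icc (-⌊√x⌋) ⌊√x⌋) := by
      simp [card_product, Int.card_divisorsAntidiag, Int.card_divisors, mul_assoc]
  _ ≤ 2 * (2 * #n.natAbs.divisors) * (3 * √x) := by
      gcongr
      exact Int.card_Icc_neg_floor_le (Real.one_le_sqrt.mpr hx)
  _ = _ := by ring

theorem stmt12 (ε : ℝ) (hε : 0 < ε) :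
    ∃ C > 0, ∀ n : ℕ, 0 < n → ∀ δ : ℝ, 1 ≤ δ →
      (Set.ncard {ξ : Matrix (Fin 2) (Fin 2) ℤ | ξ.det = (n : ℤ) ∧
          (ξ 0 0 = 0 ∨ ξ 1 1 = 0) ∧
          (ξ 0 0 : ℝ) ^ 2 + (ξ 0 1 : ℝ) ^ 2 + (ξ 1 0 : ℝ) ^ 2 + (ξ 1 1 : ℝ) ^ 2 ≤
            6 * (n : ℝ) * δ} : ℝ)
        ≤ C * (n : ℝ) ^ ((1 : ℝ) / 2 + ε) * δ ^ ((1 : ℝ) / 2) := by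
  obtain ⟨C, hC, hdiv⟩ := Nat.card_divisors_le_mul_rpow hε
  refine ⟨36 * C, by positivity, fun n hn δ hδ ↦ ?_⟩
  have hn1 : (1 : ℝ) ≤ n := by exact_mod_cast hn
  have hsqrt : √(6 * n * δ) ≤ 3 * (n : ℝ) ^ ((1 : ℝ) / 2) * δ ^ ((1 : ℝ) / 2) := by
    rw [sqrt_mul (by positivity), sqrt_mul (by norm_num), ← sqrt_eq_rpow, ← sqrt_eq_rpow]
    gcongr
    rw [sqrt_le_left (by norm_num)]
    norm_num
  calc _ ≤ 12 * #(n : ℤ).natAbs.divisors * √(6 * n * δ) :=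
        ncard_zeroDiagDetSet_le (by exact_mod_cast hn.ne') (by nlinarith)
    _ ≤ 12 * (C * (n : ℝ) ^ ε) * (3 * (n : ℝ) ^ ((1 : ℝ) / 2) * δ ^ ((1 : ℝ) / 2)) := by
        rw [Int.natAbs_natCast]
        gcongr
        exact hdiv n hn.ne'
    _ = _ := by
        rw [rpow_add (by positivity)]
        ring
end

section
/- Let y ≥ A > 0, 0 < δ ≤ 1, and N ≥ 1. The number of traceless integer matrices ((e, b),(c, −e)) with c ≠ 0 (here e ∈ (1/2)ℤ, b, c ∈ ℤ) satisfying 2(e−xc)² + (b+2xe−x²c)²/y² + y²c² < N(4+2δ) and 4(e−xc)² + (b+2x(e−xc)+(x²+y²)c)²/y² < 4Nδ is at most C_A (N^{3/2}δ + N^{1/2}). -/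
/-- Auxiliary arithmetic inequality. -/
lemma stmt13_arith (A y s r w : ℝ) (hA : 0 < A) (hy : A ≤ y) (hs : 0 ≤ s)
    (hr : 1 ≤ r) (hw0 : 0 ≤ w) (hw : w ≤ 5/2 * r) :
    (4*s+3) * ((4*y*s+3) * (2 * w / y)) ≤ 200 * (1 + 1/A) * (r*s^2 + r) := by
  have hy0 : 0 < y := lt_of_lt_of_le hA hy
  have hu0 : 0 < 1/A := by positivity
  have huy : 1 ≤ (1/A) * y := by
    rw [div_mul_eq_mul_div, le_div_iff₀ hA]
    linarith
  have hrw : (4*s+3) * ((4*y*s+3) * (2 * w / y)) =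
      ((4*s+3) * ((4*y*s+3) * (2*w))) / y := by ring
  rw [hrw, div_le_iff₀ hy0]
  set u := 1/A with hu
  have hr0 : 0 ≤ r := by linarith
  have hsq : 2*s ≤ s^2 + 1 := by nlinarith [sq_nonneg (s-1)]
  have hwd : 0 ≤ 5/2 * r - w := by linarith
  nlinarith [mul_nonneg hwd (mul_nonneg (le_of_lt hy0) (sq_nonneg s)),
    mul_nonneg hwd hs,
    mul_nonneg hwd (mul_nonneg (le_of_lt hy0) hs),
    mul_le_mul_of_nonneg_left hsq (by positivity : (0:ℝ) ≤ 30 * r),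
    mul_le_mul_of_nonneg_left hsq (by positivity : (0:ℝ) ≤ 30 * (r * y)),
    mul_le_mul_of_nonneg_left huy (by positivity : (0:ℝ) ≤ 200 * (r*s^2 + r)),
    mul_nonneg (mul_nonneg hr0 (le_of_lt hy0)) (sq_nonneg s),
    mul_nonneg hr0 (le_of_lt hy0), mul_nonneg hr0 (sq_nonneg s)]

set_option maxHeartbeats 1000000 in
/-- Count of traceless matrices `((e,b),(c,−e))` with `e ∈ ½ℤ`, `b, c ∈ ℤ`, `c ≠ 0`,
encoded as triples `v = (e', b, c) ∈ ℤ³` with `e = e'/2`. -/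
theorem stmt13 (A : ℝ) (hA : 0 < A) :
    ∃ C > 0, ∀ x y N δ : ℝ, A ≤ y → 0 < δ → δ ≤ 1 → 1 ≤ N →
      (Set.ncard {v : ℤ × ℤ × ℤ | v.2.2 ≠ 0 ∧
          2 * ((v.1 : ℝ) / 2 - x * (v.2.2 : ℝ)) ^ 2 +
              ((v.2.1 : ℝ) + 2 * x * ((v.1 : ℝ) / 2) - x ^ 2 * (v.2.2 : ℝ)) ^ 2 / y ^ 2 +
              y ^ 2 * (v.2.2 : ℝ) ^ 2 < N * (4 + 2 * δ) ∧
          4 * ((v.1 : ℝ) / 2 - x * (v.2.2 : ℝ)) ^ 2 +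
              ((v.2.1 : ℝ) + 2 * x * ((v.1 : ℝ) / 2 - x * (v.2.2 : ℝ)) +
                  (x ^ 2 + y ^ 2) * (v.2.2 : ℝ)) ^ 2 / y ^ 2 < 4 * N * δ} : ℝ)
        ≤ C * (N ^ ((3 : ℝ) / 2) * δ + N ^ ((1 : ℝ) / 2)) := by
  classical
  refine ⟨200 * (1 + 1/A), by positivity, ?_⟩
  intro x y N δ hy hδ hδ1 hN
  have hy0 : 0 < y := lt_of_lt_of_le hA hy
  have hN0 : 0 < N := lt_of_lt_of_le one_pos hN
  set S : Set (ℤ × ℤ × ℤ) := {v : ℤ × ℤ × ℤ | v.2.2 ≠ 0 ∧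
          2 * ((v.1 : ℝ) / 2 - x * (v.2.2 : ℝ)) ^ 2 +
              ((v.2.1 : ℝ) + 2 * x * ((v.1 : ℝ) / 2) - x ^ 2 * (v.2.2 : ℝ)) ^ 2 / y ^ 2 +
              y ^ 2 * (v.2.2 : ℝ) ^ 2 < N * (4 + 2 * δ) ∧
          4 * ((v.1 : ℝ) / 2 - x * (v.2.2 : ℝ)) ^ 2 +
              ((v.2.1 : ℝ) + 2 * x * ((v.1 : ℝ) / 2 - x * (v.2.2 : ℝ)) +
                  (x ^ 2 + y ^ 2) * (v.2.2 : ℝ)) ^ 2 / y ^ 2 < 4 * N * δ} with hS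
  set s : ℝ := Real.sqrt (N * δ) with hsdef
  set r : ℝ := Real.sqrt N with hrdef
  have hs0 : 0 ≤ s := Real.sqrt_nonneg _
  have hs2 : s ^ 2 = N * δ := Real.sq_sqrt (by positivity)
  have hr1 : 1 ≤ r := by
    rw [hrdef, show (1:ℝ) = Real.sqrt 1 by simp]
    exact Real.sqrt_le_sqrt hN
  have hr2 : r ^ 2 = N := Real.sq_sqrt (le_of_lt hN0)
  set w : ℝ := Real.sqrt (6 * N) with hwdef
  have hw0 : 0 ≤ w := Real.sqrt_nonneg _
  have hw2 : w ^ 2 = 6 * N := Real.sq_sqrt (by positivity)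
  have hw : w ≤ 5/2 * r := by
    rw [hwdef, hrdef]
    calc Real.sqrt (6 * N) ≤ Real.sqrt ((5/2)^2 * N) := Real.sqrt_le_sqrt (by nlinarith)
      _ = 5/2 * Real.sqrt N := by
          rw [Real.sqrt_mul (by positivity), Real.sqrt_sq (by norm_num)]
  set nE : ℤ := ⌊2*s + 1⌋ with hnE
  set nB : ℤ := ⌊2*y*s + 1⌋ with hnB
  set nC : ℤ := ⌊w / y⌋ with hnC
  have hnE0 : 0 ≤ nE := Int.le_floor.mpr (by push_cast; linarith)
  have hnB0 : 0 ≤ nB := Int.le_floor.mpr (by push_cast; positivity)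
  have hnC0 : 0 ≤ nC := Int.le_floor.mpr (by push_cast; positivity)
  set T : Finset (ℤ × ℤ × ℤ) :=
    (Finset.Icc (-nE) nE) ×ˢ ((Finset.Icc (-nB) nB) ×ˢ ((Finset.Icc (-nC) nC).erase 0))
    with hT
  set f : ℤ × ℤ × ℤ → ℤ × ℤ × ℤ := fun v =>
    (v.1 - ⌊2*x*(v.2.2 : ℝ)⌋,
     (v.2.1 + ⌊x*(v.1 : ℝ) + (y^2 - x^2)*(v.2.2 : ℝ)⌋,
     v.2.2)) with hf
  have hinj : Function.Injective f := by
    rintro ⟨a1, a2, a3⟩ ⟨b1, b2, b3⟩ h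
    simp only [hf, Prod.mk.injEq] at h
    obtain ⟨h1, h2, h3⟩ := h
    subst h3
    have ha1 : a1 = b1 := by omega
    subst ha1
    have : a2 = b2 := by omega
    subst this
    rfl
  have hsub : f '' S ⊆ ↑T := by
    rintro _ ⟨v, hv, rfl⟩
    obtain ⟨hc0, h1, h2⟩ := hv
    set a : ℝ := (v.1 : ℝ) with hadef
    set b : ℝ := (v.2.1 : ℝ) with hbdef
    set c : ℝ := (v.2.2 : ℝ) with hcdef
    have hy2 : (0:ℝ) < y^2 := by positivity
    have hterm2 : 0 ≤ (b + 2*x*(a/2 - x*c) + (x^2+y^2)*c)^2 / y^2 := by positivity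
    have hterm1 : 0 ≤ (b + 2*x*(a/2) - x^2*c)^2 / y^2 := by positivity
    have hEsq : (a - 2*x*c)^2 < (2*s)^2 := by
      have e1 : (a - 2*x*c)^2 = 4*((a/2 - x*c)^2) := by ring
      have e2 : (2*s)^2 = 4*s^2 := by ring
      rw [hs2] at e2
      linarith [h2, hterm2]
    have hE := abs_lt_of_sq_lt_sq' hEsq (by linarith)
    have hBsq : (b + (x*a + (y^2 - x^2)*c))^2 < (2*y*s)^2 := by
      have h2' : (b + 2*x*(a/2 - x*c) + (x^2+y^2)*c)^2 / y^2 < 4*N*δ := by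
        linarith [sq_nonneg (a/2 - x*c), h2]
      rw [div_lt_iff₀ hy2] at h2'
      have heq : b + 2*x*(a/2 - x*c) + (x^2+y^2)*c = b + (x*a + (y^2 - x^2)*c) := by ring
      rw [heq] at h2'
      have e2 : (2*y*s)^2 = 4*s^2*y^2 := by ring
      rw [hs2] at e2
      have e3 : 4*(N*δ)*y^2 = 4*N*δ*y^2 := by ring
      linarith [h2']
    have hB := abs_lt_of_sq_lt_sq' hBsq (by positivity)
    have hCsq : (y*c)^2 < w^2 := by
      rw [hw2]
      have e1 : (y*c)^2 = y^2*c^2 := by ring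
      have hNd : N*δ ≤ N := by nlinarith
      linarith [h1, sq_nonneg (a/2 - x*c), hterm1]
    have hC := abs_lt_of_sq_lt_sq' hCsq hw0
    have hfl1 : (⌊2*x*c⌋ : ℝ) ≤ 2*x*c := Int.floor_le _
    have hfl1' : 2*x*c < ⌊2*x*c⌋ + 1 := Int.lt_floor_add_one _
    have hfl2 : (⌊x*a + (y^2 - x^2)*c⌋ : ℝ) ≤ x*a + (y^2 - x^2)*c := Int.floor_le _
    have hfl2' : x*a + (y^2 - x^2)*c < ⌊x*a + (y^2 - x^2)*c⌋ + 1 := Int.lt_floor_add_one _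
    simp only [hf, hT, Finset.coe_product, Set.mem_prod, Finset.mem_coe, Finset.mem_Icc,
      Finset.mem_erase]
    refine ⟨⟨?_, ?_⟩, ⟨?_, ?_⟩, hc0, ?_, ?_⟩
    · rw [neg_le]
      exact Int.le_floor.mpr (by push_cast; linarith [hE.1])
    · exact Int.le_floor.mpr (by push_cast; linarith [hE.2])
    · rw [neg_le]
      exact Int.le_floor.mpr (by push_cast; linarith [hB.1])
    · exact Int.le_floor.mpr (by push_cast; linarith [hB.2])
    · rw [neg_le]
      refine Int.le_floor.mpr ?_
      rw [le_div_iff₀ hy0]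
      push_cast
      nlinarith [hC.1]
    · refine Int.le_floor.mpr ?_
      rw [le_div_iff₀ hy0]
      nlinarith [hC.2]
  have hle : (S.ncard : ℝ) ≤ (T.card : ℝ) := by
    have h1' : S.ncard = (f '' S).ncard := (Set.ncard_image_of_injective S hinj).symm
    have h2' : (f '' S).ncard ≤ T.card := by
      rw [← Set.ncard_coe_finset]
      exact Set.ncard_le_ncard hsub T.finite_toSet
    exact_mod_cast h1' ▸ h2'
  have hcastIcc : ∀ n : ℤ, 0 ≤ n → ((Finset.Icc (-n) n).card : ℝ) = 2*(n:ℝ) + 1 := by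
    intro n hn
    rw [Int.card_Icc]
    have h' : (n + 1 - -n).toNat = (2*n+1).toNat := by congr 1; ring
    rw [h']
    have h2' : ((2*n+1).toNat : ℤ) = 2*n+1 := Int.toNat_of_nonneg (by omega)
    have : (((2*n+1).toNat : ℤ) : ℝ) = 2*(n:ℝ)+1 := by rw [h2']; push_cast; ring
    exact_mod_cast this
  have hcardE : ((Finset.Icc (-nE) nE).card : ℝ) ≤ 4*s + 3 := by
    rw [hcastIcc nE hnE0]
    have := Int.floor_le (2*s + 1)
    rw [← hnE] at this
    linarith
  have hcardB : ((Finset.Icc (-nB) nB).card : ℝ) ≤ 4*y*s + 3 := by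
    rw [hcastIcc nB hnB0]
    have := Int.floor_le (2*y*s + 1)
    rw [← hnB] at this
    linarith
  have hcardC : (((Finset.Icc (-nC) nC).erase 0).card : ℝ) ≤ 2 * w / y := by
    have hmem : (0:ℤ) ∈ Finset.Icc (-nC) nC := by simp [Finset.mem_Icc]; omega
    rw [Finset.card_erase_of_mem hmem]
    have hcard1 : 1 ≤ (Finset.Icc (-nC) nC).card := Finset.card_pos.mpr ⟨0, hmem⟩
    rw [Nat.cast_sub hcard1, hcastIcc nC hnC0]
    have := Int.floor_le (w / y)
    rw [← hnC] at this
    have hdiv : (nC : ℝ) ≤ w / y := this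
    push_cast
    rw [mul_div_assoc]
    linarith
  have hTcard : (T.card : ℝ) ≤ (4*s+3) * ((4*y*s+3) * (2 * w / y)) := by
    rw [hT, Finset.card_product, Finset.card_product]
    push_cast
    have hinner : (((Finset.Icc (-nB) nB).card : ℝ) * (((Finset.Icc (-nC) nC).erase 0).card : ℝ))
        ≤ (4*y*s+3) * (2 * w / y) := by
      apply mul_le_mul hcardB hcardC (by positivity) (by positivity)
    apply mul_le_mul hcardE hinner (by positivity) (by positivity)
  have harith := stmt13_arith A y s r w hA hy hs0 hr1 hw0 hw
  have hrpow1 : N ^ ((1:ℝ)/2) = r := by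
    rw [hrdef, Real.sqrt_eq_rpow]
  have hrpow3 : N ^ ((3:ℝ)/2) = N * r := by
    have : ((3:ℝ)/2) = 1 + 1/2 := by norm_num
    rw [this, Real.rpow_add hN0, Real.rpow_one, hrpow1]
  rw [hrpow1, hrpow3]
  have hfin : r * s^2 + r = N * r * δ + r := by rw [hs2]; ring
  calc (S.ncard : ℝ) ≤ (T.card : ℝ) := hle
    _ ≤ (4*s+3) * ((4*y*s+3) * (2 * w / y)) := hTcard
    _ ≤ 200 * (1 + 1/A) * (r*s^2 + r) := harith
    _ = 200 * (1 + 1/A) * (N * r * δ + r) := by rw [hfin]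
end
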